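/- Let k ≥ 1 and let V_k ⊆ S*_k and V_{k−1} ⊆ S*_{k−1} be subspaces. For • ∈ {k−1, k} define W_• = V_• if V_• = S*_•, and otherwise W_• = V_• + ℂ·F_•, where F_• is the largest monomial of degree • not lying in V_•. If S_1 ⌟ V_k ⊆ V_{k−1}, then S_1 ⌟ W_k ⊆ W_{k−1}. -/
import Mathlib


open MvPolynomial

noncomputable section

/-- The contraction operator `c_i` (apolarity action of the `i`-th dual variable):
`c_i(x^u) = x^{u−e_i}` if `u_i > 0` and `c_i(x^u) = 0` otherwise, extended linearly. -/
def contract {n : ℕ} (i : Fin (n + 1)) (f : MvPolynomial (Fin (n + 1)) ℂ) :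
    MvPolynomial (Fin (n + 1)) ℂ :=
  ∑ u ∈ f.support,
    if u i = 0 then 0 else monomial (u - Finsupp.single i 1) (f.coeff u)

/-- `S_1 ⌟ V`: the span of all contractions `c_i(f)` with `f ∈ V`. -/
def contractSpan {n : ℕ} (V : Submodule ℂ (MvPolynomial (Fin (n + 1)) ℂ)) :
    Submodule ℂ (MvPolynomial (Fin (n + 1)) ℂ) :=
  Submodule.span ℂ {g | ∃ i : Fin (n + 1), ∃ f ∈ V, g = contract i f}

/-- `W` is obtained from a subspace `V ⊆ S*_k` by adding the largest degree-`k` monomial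
not in `V` (and `W = V` when `V = S*_k`). -/
def IsAugmented (n k : ℕ) (lo : LinearOrder (Fin (n + 1) →₀ ℕ))
    (V W : Submodule ℂ (MvPolynomial (Fin (n + 1)) ℂ)) : Prop :=
  (V = homogeneousSubmodule (Fin (n + 1)) ℂ k ∧ W = V) ∨
    (∃ F : Fin (n + 1) →₀ ℕ, (∑ j, F j = k) ∧
      (monomial F 1 : MvPolynomial (Fin (n + 1)) ℂ) ∉ V ∧
      (∀ v : Fin (n + 1) →₀ ℕ, (∑ j, v j = k) →
        (monomial v 1 : MvPolynomial (Fin (n + 1)) ℂ) ∉ V → lo.le v F) ∧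
      W = V ⊔ Submodule.span ℂ {(monomial F 1 : MvPolynomial (Fin (n + 1)) ℂ)})

/-! ### Auxiliary lemmas -/

lemma contract_eq_sum_subset {n : ℕ} (i : Fin (n + 1)) (f : MvPolynomial (Fin (n + 1)) ℂ)
    (s : Finset (Fin (n + 1) →₀ ℕ)) (hs : f.support ⊆ s) :
    contract i f = ∑ u ∈ s,
      if u i = 0 then 0 else monomial (u - Finsupp.single i 1) (f.coeff u) := by
  unfold contract
  refine Finset.sum_subset hs ?_
  intro u _ hu
  rw [MvPolynomial.notMem_support_iff.mp hu]
  split <;> simp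

lemma contract_add {n : ℕ} (i : Fin (n + 1)) (f g : MvPolynomial (Fin (n + 1)) ℂ) :
    contract i (f + g) = contract i f + contract i g := by
  rw [contract_eq_sum_subset i (f + g) (f.support ∪ g.support)
        (MvPolynomial.support_add),
      contract_eq_sum_subset i f (f.support ∪ g.support) Finset.subset_union_left,
      contract_eq_sum_subset i g (f.support ∪ g.support) Finset.subset_union_right,
      ← Finset.sum_add_distrib]
  refine Finset.sum_congr rfl fun u _ => ?_
  rw [coeff_add]
  split <;> simp

lemma contract_monomial {n : ℕ} (i : Fin (n + 1)) (u : Fin (n + 1) →₀ ℕ) (c : ℂ) :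
    contract i (monomial u c) =
      if u i = 0 then 0 else monomial (u - Finsupp.single i 1) c := by
  rcases eq_or_ne c 0 with rfl | hc
  · simp [contract]
  · unfold contract
    rw [MvPolynomial.support_monomial, if_neg hc, Finset.sum_singleton,
      MvPolynomial.coeff_monomial, if_pos rfl]

lemma sum_eq_degree {n : ℕ} (F : Fin (n + 1) →₀ ℕ) : ∑ j, F j = F.degree := by
  rw [Finsupp.degree]
  exact (Finset.sum_subset (Finset.subset_univ _)
    (fun x _ hx => Finsupp.notMem_support_iff.mp hx)).symm

lemma mem_homog {n k : ℕ} (F : Fin (n + 1) →₀ ℕ) (hF : ∑ j, F j = k) :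
    (monomial F 1 : MvPolynomial (Fin (n + 1)) ℂ) ∈
      homogeneousSubmodule (Fin (n + 1)) ℂ k := by
  rw [mem_homogeneousSubmodule]
  exact isHomogeneous_monomial _ (by rw [← sum_eq_degree]; exact hF)

lemma sub_single_sum {n k : ℕ} (F : Fin (n + 1) →₀ ℕ) (i : Fin (n + 1)) (hFi : F i ≠ 0)
    (hF : ∑ j, F j = k) : ∑ j, ((F - Finsupp.single i 1 : Fin (n+1) →₀ ℕ)) j = k - 1 := by
  have hle : Finsupp.single i 1 ≤ F := Finsupp.single_le_iff.mpr (Nat.one_le_iff_ne_zero.mpr hFi)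
  have hadd : (F - Finsupp.single i 1) + Finsupp.single i 1 = F := tsub_add_cancel_of_le hle
  have := congrArg (fun G : Fin (n+1) →₀ ℕ => ∑ j, G j) hadd
  simp only [Finsupp.add_apply, Finset.sum_add_distrib] at this
  have hs : ∑ j, (Finsupp.single i 1 : Fin (n+1) →₀ ℕ) j = 1 := by
    simp [Finsupp.single_apply]
  omega

lemma vk1_le_wk1 {n k : ℕ} {lo : LinearOrder (Fin (n + 1) →₀ ℕ)}
    {V W : Submodule ℂ (MvPolynomial (Fin (n + 1)) ℂ)}
    (hW : IsAugmented n k lo V W) : V ≤ W := by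
  rcases hW with ⟨_, hW⟩ | ⟨G, _, _, _, hW⟩
  · rw [hW]
  · rw [hW]; exact le_sup_left

lemma key_lemma {n k : ℕ} (hk : 1 ≤ k)
    (lo : LinearOrder (Fin (n + 1) →₀ ℕ))
    (hlo : ∀ a b c : Fin (n + 1) →₀ ℕ, lo.lt a b → lo.lt (a + c) (b + c))
    (Vk Vk1 Wk1 : Submodule ℂ (MvPolynomial (Fin (n + 1)) ℂ))
    (hWk1 : IsAugmented n (k - 1) lo Vk1 Wk1)
    (h : contractSpan Vk ≤ Vk1)
    (F : Fin (n + 1) →₀ ℕ) (hF : ∑ j, F j = k)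
    (hFmax : ∀ v : Fin (n + 1) →₀ ℕ, (∑ j, v j = k) →
        (monomial v 1 : MvPolynomial (Fin (n + 1)) ℂ) ∉ Vk → lo.le v F)
    (i : Fin (n + 1)) :
    contract i (monomial F 1 : MvPolynomial (Fin (n + 1)) ℂ) ∈ Wk1 := by
  rw [contract_monomial]
  by_cases hFi : F i = 0
  · simp [hFi]
  rw [if_neg hFi]
  have hF'deg : ∑ j, ((F - Finsupp.single i 1 : Fin (n+1) →₀ ℕ)) j = k - 1 :=
    sub_single_sum F i hFi hF
  have hFF' : (F - Finsupp.single i 1) + Finsupp.single i 1 = F :=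
    tsub_add_cancel_of_le (Finsupp.single_le_iff.mpr (Nat.one_le_iff_ne_zero.mpr hFi))
  rcases hWk1 with ⟨hVeq, hW⟩ | ⟨G, hG, hGnot, hGmax, hW⟩
  · rw [hW, hVeq]
    exact mem_homog _ hF'deg
  · by_cases hmem : (monomial (F - Finsupp.single i 1) 1 : MvPolynomial (Fin (n+1)) ℂ) ∈ Vk1
    · rw [hW]; exact Submodule.mem_sup_left hmem
    have h1 : lo.le (F - Finsupp.single i 1) G := hGmax _ hF'deg hmem
    have heq : F - Finsupp.single i 1 = G := by
      by_contra hne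
      have hlt : lo.lt (F - Finsupp.single i 1) G :=
        @lt_of_le_of_ne _ lo.toPartialOrder _ _ h1 hne
      have hlt2 : lo.lt F (G + Finsupp.single i 1) := by
        have := hlo _ _ (Finsupp.single i 1) hlt
        rwa [hFF'] at this
      have hGdeg : ∑ j, ((G + Finsupp.single i 1 : Fin (n+1) →₀ ℕ)) j = k := by
        have hs : ∑ j, (Finsupp.single i 1 : Fin (n+1) →₀ ℕ) j = 1 := by
          simp [Finsupp.single_apply]
        simp only [Finsupp.add_apply, Finset.sum_add_distrib, hG, hs]
        omega
      have hGin : (monomial (G + Finsupp.single i 1) 1 : MvPolynomial (Fin (n+1)) ℂ) ∈ Vk := by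
        by_contra hnotin
        have hle := hFmax _ hGdeg hnotin
        exact @lt_irrefl _ lo.toPreorder F (@lt_of_lt_of_le _ lo.toPreorder _ _ _ hlt2 hle)
      have hcon : contract i (monomial (G + Finsupp.single i 1) 1 :
          MvPolynomial (Fin (n+1)) ℂ) ∈ contractSpan Vk :=
        Submodule.subset_span ⟨i, _, hGin, rfl⟩
      rw [contract_monomial, if_neg (by simp), add_tsub_cancel_right] at hcon
      exact hGnot (h hcon)
    rw [heq, hW]
    exact Submodule.mem_sup_right (Submodule.mem_span_singleton_self _)

/-- If `S_1 ⌟ V_k ⊆ V_{k−1}`, then after adding the largest missing monomials,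
`S_1 ⌟ W_k ⊆ W_{k−1}`. -/
theorem contract_of_augmented (n k : ℕ) (hn : 1 ≤ n) (hk : 1 ≤ k)
    (lo : LinearOrder (Fin (n + 1) →₀ ℕ))
    (hlo : ∀ a b c : Fin (n + 1) →₀ ℕ, lo.lt a b → lo.lt (a + c) (b + c))
    (Vk Vk1 Wk Wk1 : Submodule ℂ (MvPolynomial (Fin (n + 1)) ℂ))
    (hVk : Vk ≤ homogeneousSubmodule (Fin (n + 1)) ℂ k)
    (hVk1 : Vk1 ≤ homogeneousSubmodule (Fin (n + 1)) ℂ (k - 1))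
    (hWk : IsAugmented n k lo Vk Wk)
    (hWk1 : IsAugmented n (k - 1) lo Vk1 Wk1)
    (h : contractSpan Vk ≤ Vk1) :
    contractSpan Wk ≤ Wk1 := by
  have hVle : Vk1 ≤ Wk1 := vk1_le_wk1 hWk1
  rcases hWk with ⟨_, hWeq⟩ | ⟨F, hF, hFnot, hFmax, hWeq⟩
  · subst hWeq; exact le_trans h hVle
  · rw [contractSpan, Submodule.span_le]
    rintro g ⟨i, f, hf, rfl⟩
    rw [hWeq] at hf
    obtain ⟨v, hv, w, hw, rfl⟩ := Submodule.mem_sup.mp hf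
    obtain ⟨c, rfl⟩ := Submodule.mem_span_singleton.mp hw
    rw [contract_add]
    have hsm : contract i (c • (monomial F 1 : MvPolynomial (Fin (n+1)) ℂ)) =
        c • contract i (monomial F 1 : MvPolynomial (Fin (n+1)) ℂ) := by
      rw [MvPolynomial.smul_monomial, contract_monomial, contract_monomial]
      split <;> simp [MvPolynomial.smul_monomial]
    rw [hsm]
    exact Wk1.add_mem (hVle (h (Submodule.subset_span ⟨i, v, hv, rfl⟩)))
      (Wk1.smul_mem c (key_lemma hk lo hlo Vk Vk1 Wk1 hWk1 h F hF hFmax i))
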